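/- arXiv:0802.2836 — 4 statements merged into one kernel-verified Lean document; each statement's English description precedes it below -/
import Mathlib

section
/- Let α > 1, let k be a positive integer, and let G = (U, V, E) be a bipartite graph in which every induced matching has size at most k/α. Consider the 4-layer WGP instance built from G (interference radius d_I = 1) with m = (1 − 1/α)^{-1}·(1 + k/α)·(2k+1)·k packets, all with origin o, released in groups of k, the h-th group at time (k+1)h for h = 0, …, m/k − 1. Then every feasible schedule for this instance has maximum flow time at least (2k+1)·k. -/
/-- An instance of the Wireless Gathering Problem. -/
structure WGPInstance (V J : Type*) where
  /-- the communication graph -/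
  G : SimpleGraph V
  /-- the sink -/
  s : V
  /-- the interference radius -/
  dI : ℕ
  /-- origins of the packets -/
  o : J → V
  /-- release dates of the packets -/
  r : J → ℕ

namespace WGPInstance

variable {V J : Type*}

/-- Two calls `(u,v)` and `(u',v')` occurring in the same round interfere if
`d(u',v) ≤ d_I` or `d(u,v') ≤ d_I`. -/
def Interferes (I : WGPInstance V J) (u v u' v' : V) : Prop :=
  I.G.edist u' v ≤ I.dI ∨ I.G.edist u v' ≤ I.dI

/-- A feasible (unit-speed) schedule: `x j t` is the node holding packet `j` at round `t`.
Packets sit at their origin until their release date, move along edges of `G`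
(the transition from `x j t` to `x j (t+1)` being a call of round `t`), calls of a round
are pairwise non-interfering and have distinct senders, and every packet reaches the sink. -/
def Feasible (I : WGPInstance V J) (x : J → ℕ → V) : Prop :=
  (∀ j t, t ≤ I.r j → x j t = I.o j) ∧
  (∀ j t, x j (t + 1) = x j t ∨ I.G.Adj (x j t) (x j (t + 1))) ∧
  (∀ j k t, j ≠ k → x j (t + 1) ≠ x j t → x k (t + 1) ≠ x k t →
    x j t ≠ x k t ∧ ¬ I.Interferes (x j t) (x j (t + 1)) (x k t) (x k (t + 1))) ∧
  (∀ j, ∃ t, x j t = I.s)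

/-- The completion time of packet `j`: the first round `t ≥ r_j` with `x j t = s`. -/
noncomputable def completion (I : WGPInstance V J) (x : J → ℕ → V) (j : J) : ℕ :=
  sInf {t | I.r j ≤ t ∧ x j t = I.s}

/-- The flow time of packet `j`: `F_j = C_j - r_j`. -/
noncomputable def flow (I : WGPInstance V J) (x : J → ℕ → V) (j : J) : ℕ :=
  I.completion x j - I.r j

/-- Packet `j` is available (active) at round `t` if it has been released and
has not yet reached the sink. -/
def Active (I : WGPInstance V J) (x : J → ℕ → V) (j : J) (t : ℕ) : Prop :=
  I.r j ≤ t ∧ x j t ≠ I.s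

/-- `x` is a schedule that a Priority Greedy algorithm with priority function `prio`
(lower `prio`-value = higher priority) may produce: packets that reached the sink stay
there; every call moves an active packet one step along a shortest path to the sink;
and an active packet is left in place only if every such shortest-path step would
interfere with the call of some higher-priority packet of that round. -/
def PriorityGreedy (I : WGPInstance V J) (prio : J → ℕ) (x : J → ℕ → V) : Prop :=
  Function.Injective prio ∧
  (∀ j t, x j t = I.s → x j (t + 1) = I.s) ∧
  (∀ j t, x j (t + 1) ≠ x j t →
    I.Active x j t ∧ I.G.dist (x j (t + 1)) I.s + 1 = I.G.dist (x j t) I.s) ∧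
  (∀ j t, I.Active x j t → x j (t + 1) = x j t →
    ∀ v, I.G.Adj (x j t) v → I.G.dist v I.s + 1 = I.G.dist (x j t) I.s →
      ∃ k, prio k < prio j ∧ x k (t + 1) ≠ x k t ∧
        I.Interferes (x j t) v (x k t) (x k (t + 1)))

/-- FIFO is the Priority Greedy algorithm in which packets with earlier release dates
have higher priority (ties broken arbitrarily). -/
def FIFO (I : WGPInstance V J) (x : J → ℕ → V) : Prop :=
  ∃ prio : J → ℕ, (∀ j k, I.r j < I.r k → prio j < prio k) ∧ I.PriorityGreedy prio x

end WGPInstance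

/-- The vertices of the 4-layer network built from a bipartite graph with parts `U`
and `W`: a source `src`, the two middle layers `left u` (`u ∈ U`) and `right w`
(`w ∈ W`), and a sink `sink`. -/
inductive Layer (U W : Type*) where
  | src : Layer U W
  | left : U → Layer U W
  | right : W → Layer U W
  | sink : Layer U W

/-- The 4-layer graph built from a bipartite graph `(U, W, E)`: `U` and `W` are made
into cliques, `src` is adjacent to every node of `U`, `sink` is adjacent to every node
of `W`, and the edges between `U` and `W` are exactly those of `E`. -/
def fourLayerGraph {U W : Type*} (E : U → W → Prop) : SimpleGraph (Layer U W) :=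
  SimpleGraph.fromRel fun a b =>
    match a, b with
    | .src, .left _ => True
    | .left _, .left _ => True
    | .left u, .right w => E u w
    | .right _, .right _ => True
    | .right _, .sink => True
    | _, _ => False

/-- The 4-layer WGP instance built from a bipartite graph `(U, W, E)`: interference
radius `d_I = 1`, `m` packets all with origin `src`, released in groups of `k`, the
`h`-th group at time `(k+1)·h`. -/
def fourLayerInstance {U W : Type*} (E : U → W → Prop) (k m : ℕ) :
    WGPInstance (Layer U W) (Fin m) where
  G := fourLayerGraph E
  s := .sink
  dI := 1
  o := fun _ => .src
  r := fun j => (k + 1) * ((j : ℕ) / k)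

/-- `M` is an induced matching of the bipartite graph `(U, W, E)`: its elements are
edges, no two of them share an endpoint, and no edge of the graph joins two of them. -/
def IsBipartiteInducedMatching {U W : Type*} (E : U → W → Prop)
    (M : Finset (U × W)) : Prop :=
  (∀ p ∈ M, E p.1 p.2) ∧
  ∀ p ∈ M, ∀ q ∈ M, p ≠ q →
    p.1 ≠ q.1 ∧ p.2 ≠ q.2 ∧ ¬ E p.1 q.2 ∧ ¬ E q.1 p.2

/-!
Suppose every flow time is below `F = (2k+1)k`. Then all `m` packets reach the sink by round
`(k+1)(m/k - 1) + F`. Each packet makes a call into the sink and a call from `U` to `W`. Two calls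
into the sink interfere, and a call into the sink interferes with every `U`–`W` call since `W` is
a clique, so the `m` sink rounds are distinct and none of them is a crossing round. The `U`–`W`
calls of one round form an induced matching, so there are at least `mα/k` crossing rounds, and
`m + mα/k` exceeds the horizon for the given `m`.
-/

theorem exists_lt_not_and_succ_of_not_zero {p : ℕ → Prop} {n : ℕ} (h0 : ¬p 0) (hn : p n) :
    ∃ t < n, ¬p t ∧ p (t + 1) := by
  induction n with
  | zero => exact absurd hn h0
  | succ n ih =>
    by_cases h : p n
    · obtain ⟨t, ht, hstep⟩ := ih h
      exact ⟨t, ht.trans n.lt_succ_self, hstep⟩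
    · exact ⟨n, n.lt_succ_self, h, hn⟩

namespace WGPInstance

variable {V J : Type*} {I : WGPInstance V J} {x : J → ℕ → V} {j j' : J} {t : ℕ}

theorem Feasible.adj_of_ne (hx : I.Feasible x) (h : x j (t + 1) ≠ x j t) :
    I.G.Adj (x j t) (x j (t + 1)) :=
  (hx.2.1 j t).resolve_left h

theorem Feasible.eq_of_interferes (hx : I.Feasible x) (hj : x j (t + 1) ≠ x j t)
    (hj' : x j' (t + 1) ≠ x j' t)
    (h : I.Interferes (x j t) (x j (t + 1)) (x j' t) (x j' (t + 1))) : j = j' :=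
  by_contra fun hne => (hx.2.2.1 j j' t hne hj hj').2 h

theorem Feasible.eq_of_receiver_eq (hx : I.Feasible x) (hdI : 1 ≤ I.dI)
    (hj : x j (t + 1) ≠ x j t) (hj' : x j' (t + 1) ≠ x j' t)
    (h : x j (t + 1) = x j' (t + 1)) : j = j' := by
  refine hx.eq_of_interferes hj hj' (Or.inl ?_)
  rw [h, SimpleGraph.edist_eq_one_iff_adj.2 (hx.adj_of_ne hj')]
  exact_mod_cast hdI

theorem Feasible.exists_sink_after_release (hx : I.Feasible x) (ho : I.o j ≠ I.s) :
    ∃ t, I.r j ≤ t ∧ x j t = I.s := by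
  obtain ⟨t, ht⟩ := hx.2.2.2 j
  refine ⟨t, le_of_not_ge fun hle => ho ?_, ht⟩
  rw [← hx.1 j t hle, ht]

theorem Feasible.completion_spec (hx : I.Feasible x) (ho : I.o j ≠ I.s) :
    I.r j ≤ I.completion x j ∧ x j (I.completion x j) = I.s :=
  Nat.sInf_mem (hx.exists_sink_after_release ho)

theorem Feasible.release_lt_completion (hx : I.Feasible x) (ho : I.o j ≠ I.s) :
    I.r j < I.completion x j := by
  obtain ⟨hle, hsink⟩ := hx.completion_spec ho
  refine hle.lt_of_ne fun h => ho ?_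
  rw [← hx.1 j (I.r j) le_rfl, h, hsink]

theorem Feasible.exists_call_into_sink (hx : I.Feasible x) (ho : I.o j ≠ I.s) :
    ∃ t, t + 1 = I.completion x j ∧ x j t ≠ I.s ∧ x j (t + 1) = I.s := by
  have hlt := hx.release_lt_completion ho
  have hsucc : I.completion x j - 1 + 1 = I.completion x j := by omega
  refine ⟨I.completion x j - 1, hsucc, fun h => ?_, hsucc ▸ (hx.completion_spec ho).2⟩
  have hpred : I.completion x j - 1 < I.completion x j := by omega
  exact Nat.notMem_of_lt_sInf hpred ⟨by omega, h⟩

end WGPInstance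

def Layer.IsSinkSide {U W : Type*} : Layer U W → Prop
  | .right _ | .sink => True
  | _ => False

section FourLayerGraph

variable {U W : Type*} {E : U → W → Prop}

theorem fourLayerGraph_adj_left_right {u : U} {w : W} :
    (fourLayerGraph E).Adj (.left u) (.right w) ↔ E u w := by
  simp [fourLayerGraph]

theorem fourLayerGraph_edist_left_right_le_one_iff {u : U} {w : W} :
    (fourLayerGraph E).edist (.left u) (.right w) ≤ 1 ↔ E u w := by
  simp [SimpleGraph.edist_le_one_iff_adj_or_eq, fourLayerGraph_adj_left_right]

theorem fourLayerGraph_edist_right_right_le_one (w w' : W) :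
    (fourLayerGraph E).edist (.right w) (.right w') ≤ 1 := by
  rw [SimpleGraph.edist_le_one_iff_adj_or_eq]
  by_cases h : w = w' <;> simp [fourLayerGraph, h]

theorem fourLayerGraph_exists_right_of_adj_sink {v : Layer U W}
    (h : (fourLayerGraph E).Adj v .sink) : ∃ w, v = .right w := by
  cases v <;> simp_all [fourLayerGraph]

theorem fourLayerGraph_exists_left_right_of_adj {a b : Layer U W}
    (h : (fourLayerGraph E).Adj a b) (ha : ¬a.IsSinkSide) (hb : b.IsSinkSide) :
    ∃ u w, a = .left u ∧ b = .right w := by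
  cases a <;> cases b <;> simp_all [Layer.IsSinkSide, fourLayerGraph]

end FourLayerGraph

section FourLayerSchedule

open WGPInstance

variable {U W : Type*} {E : U → W → Prop} {k m : ℕ} {x : Fin m → ℕ → Layer U W}

theorem fourLayerInstance_origin_ne_sink (j : Fin m) :
    (fourLayerInstance E k m).o j ≠ (fourLayerInstance E k m).s :=
  nofun

theorem fourLayer_exists_crossing (hx : (fourLayerInstance E k m).Feasible x) (j : Fin m) :
    ∃ t < (fourLayerInstance E k m).completion x j,
      ∃ u w, x j t = .left u ∧ x j (t + 1) = .right w := by
  have hstart : ¬(x j 0).IsSinkSide := by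
    rw [hx.1 j 0 (Nat.zero_le _)]
    exact id
  have hend : (x j ((fourLayerInstance E k m).completion x j)).IsSinkSide := by
    rw [(hx.completion_spec (fourLayerInstance_origin_ne_sink j)).2]
    trivial
  obtain ⟨t, ht, hnot, hnext⟩ :=
    exists_lt_not_and_succ_of_not_zero (p := fun t => (x j t).IsSinkSide) hstart hend
  have hmove : x j (t + 1) ≠ x j t := fun h => hnot (h ▸ hnext)
  exact ⟨t, ht, fourLayerGraph_exists_left_right_of_adj (hx.adj_of_ne hmove) hnot hnext⟩

theorem fourLayer_crossing_edge (hx : (fourLayerInstance E k m).Feasible x) {j : Fin m}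
    {t : ℕ} {u : U} {w : W} (hu : x j t = .left u) (hw : x j (t + 1) = .right w) : E u w := by
  have hmove : x j (t + 1) ≠ x j t := by rw [hu, hw]; nofun
  have hadj := hx.adj_of_ne hmove
  rw [hu, hw] at hadj
  exact fourLayerGraph_adj_left_right.1 hadj

theorem fourLayer_crossings_induced (hx : (fourLayerInstance E k m).Feasible x)
    {j j' : Fin m} (hne : j ≠ j') {t : ℕ} {u u' : U} {w w' : W}
    (hu : x j t = .left u) (hw : x j (t + 1) = .right w)
    (hu' : x j' t = .left u') (hw' : x j' (t + 1) = .right w') :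
    u ≠ u' ∧ w ≠ w' ∧ ¬E u w' ∧ ¬E u' w := by
  have hmove : x j (t + 1) ≠ x j t := by rw [hu, hw]; nofun
  have hmove' : x j' (t + 1) ≠ x j' t := by rw [hu', hw']; nofun
  obtain ⟨hsender, hquiet⟩ := hx.2.2.1 j j' t hne hmove hmove'
  rw [hu, hu'] at hsender
  rw [hu, hw, hu', hw'] at hquiet
  simp only [Interferes, fourLayerInstance, Nat.cast_one, not_or,
    fourLayerGraph_edist_left_right_le_one_iff] at hquiet
  refine ⟨fun h => hsender (h ▸ rfl), fun h => hquiet.2 (h ▸ ?_), hquiet.2, hquiet.1⟩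
  exact fourLayer_crossing_edge hx hu hw

theorem fourLayer_not_crossing_of_call_into_sink (hx : (fourLayerInstance E k m).Feasible x)
    {j j' : Fin m} {t : ℕ} {u : U} {w : W} (hfrom : x j t ≠ .sink) (hto : x j (t + 1) = .sink)
    (hu : x j' t = .left u) (hw : x j' (t + 1) = .right w) : False := by
  have hmove : x j (t + 1) ≠ x j t := hto ▸ hfrom.symm
  have hmove' : x j' (t + 1) ≠ x j' t := by rw [hu, hw]; nofun
  obtain ⟨w₀, hw₀⟩ := fourLayerGraph_exists_right_of_adj_sink (hto ▸ hx.adj_of_ne hmove)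
  -- the sender `right w₀` into the sink hears the receiver `right w` in the clique `W`
  have hsame : j = j' := hx.eq_of_interferes hmove hmove' <| Or.inr <| by
    rw [hw₀, hw]
    simpa [fourLayerInstance] using fourLayerGraph_edist_right_right_le_one (E := E) w₀ w
  subst hsame
  rw [hto] at hw
  cases hw

theorem fourLayer_card_le_of_crossings (hx : (fourLayerInstance E k m).Feasible x) {c : ℕ}
    (hmatch : ∀ M, IsBipartiteInducedMatching E M → M.card ≤ c) {S : Finset (Fin m)} {t : ℕ}
    {u : Fin m → U} {w : Fin m → W} (hu : ∀ j ∈ S, x j t = .left (u j))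
    (hw : ∀ j ∈ S, x j (t + 1) = .right (w j)) : S.card ≤ c := by
  classical
  have hinduced {j j'} (hj : j ∈ S) (hj' : j' ∈ S) (hne : j ≠ j') :=
    fourLayer_crossings_induced hx hne (hu j hj) (hw j hj) (hu j' hj') (hw j' hj')
  have hinj : Set.InjOn (fun j => (u j, w j)) S := fun j hj j' hj' h =>
    by_contra fun hne => (hinduced hj hj' hne).1 (congrArg Prod.fst h)
  rw [← Finset.card_image_of_injOn hinj]
  refine hmatch _ ⟨?_, ?_⟩
  · simp only [Finset.mem_image]
    rintro _ ⟨j, hj, rfl⟩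
    exact fourLayer_crossing_edge hx (hu j hj) (hw j hj)
  · simp only [Finset.mem_image]
    rintro _ ⟨j, hj, rfl⟩ _ ⟨j', hj', rfl⟩ hne
    exact hinduced hj hj' fun h => hne (h ▸ rfl)

theorem fourLayer_exists_card_add_le (hx : (fourLayerInstance E k m).Feasible x) {c T : ℕ}
    (hmatch : ∀ M, IsBipartiteInducedMatching E M → M.card ≤ c)
    (hT : ∀ j, (fourLayerInstance E k m).completion x j ≤ T) :
    ∃ n, m + n ≤ T ∧ m ≤ c * n := by
  classical
  choose arr harr hfrom hto using
    fun j => hx.exists_call_into_sink (fourLayerInstance_origin_ne_sink j)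
  choose cross hcross u w hu hw using fourLayer_exists_crossing hx
  refine ⟨(Finset.univ.image cross).card, ?_, ?_⟩
  · have hmove (j) : x j (arr j + 1) ≠ x j (arr j) := fun h => hfrom j (h ▸ hto j)
    have harr_inj : Function.Injective arr := fun j j' h =>
      hx.eq_of_receiver_eq le_rfl (hmove j) (by rw [h]; exact hmove j')
        (by rw [hto j, h, hto j'])
    have hdisj : Disjoint (Finset.univ.image arr) (Finset.univ.image cross) := by
      simp only [Finset.disjoint_left, Finset.mem_image, Finset.mem_univ, true_and]
      rintro _ ⟨j, rfl⟩ ⟨j', h⟩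
      exact fourLayer_not_crossing_of_call_into_sink hx (hfrom j) (hto j) (h ▸ hu j') (h ▸ hw j')
    have hsub : Finset.univ.image arr ∪ Finset.univ.image cross ⊆ Finset.range T := by
      simp only [Finset.subset_iff, Finset.mem_union, Finset.mem_image, Finset.mem_univ,
        true_and, Finset.mem_range]
      rintro _ (⟨j, rfl⟩ | ⟨j, rfl⟩)
      · have := harr j; have := hT j; omega
      · have := hcross j; have := hT j; omega
    calc m + (Finset.univ.image cross).card
        = (Finset.univ.image arr ∪ Finset.univ.image cross).card := by
          rw [Finset.card_union_of_disjoint hdisj, Finset.card_image_of_injective _ harr_inj,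
            Finset.card_univ, Fintype.card_fin]
      _ ≤ T := by simpa using Finset.card_le_card hsub
  · simpa using Finset.card_le_mul_card_image Finset.univ c fun t _ =>
      fourLayer_card_le_of_crossings hx hmatch (u := u) (w := w)
        (fun j hj => (Finset.mem_filter.1 hj).2 ▸ hu j)
        (fun j hj => (Finset.mem_filter.1 hj).2 ▸ hw j)

theorem fourLayer_completion_le {q F : ℕ} {x : Fin (k * q) → ℕ → Layer U W}
    (hx : (fourLayerInstance E k (k * q)).Feasible x)
    (hflow : ∀ j, (fourLayerInstance E k (k * q)).flow x j < F) (j : Fin (k * q)) :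
    (fourLayerInstance E k (k * q)).completion x j ≤ (k + 1) * (q - 1) + F := by
  have hrelease : (j : ℕ) / k < q := Nat.div_lt_of_lt_mul j.2
  have hlt := hx.release_lt_completion (fourLayerInstance_origin_ne_sink j)
  have hflow_j := hflow j
  simp only [WGPInstance.flow, fourLayerInstance] at hflow_j hlt ⊢
  have := Nat.mul_le_mul_left (k + 1) (Nat.le_sub_one_of_lt hrelease)
  omega

end FourLayerSchedule

theorem mul_sub_one_eq_of_eq_inv_one_sub_inv_mul {α k m : ℝ} (hα : 1 < α)
    (hm : m = (1 - 1 / α)⁻¹ * (1 + k / α) * (2 * k + 1) * k) :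
    m * (α - 1) = (α + k) * ((2 * k + 1) * k) := by
  have hα0 : α ≠ 0 := by positivity
  have hα1 : α - 1 ≠ 0 := sub_ne_zero.2 hα.ne'
  rw [hm, one_sub_div hα0]
  field_simp

theorem mul_le_of_le_floor_div_mul {α : ℝ} {k m n : ℕ} (hα : 0 < α)
    (h : m ≤ ⌊(k : ℝ) / α⌋₊ * n) : (m : ℝ) * α ≤ n * k := by
  have hfloor : (⌊(k : ℝ) / α⌋₊ : ℝ) ≤ k / α := Nat.floor_le (by positivity)
  calc (m : ℝ) * α ≤ ((⌊(k : ℝ) / α⌋₊ * n : ℕ) : ℝ) * α := by gcongr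
    _ ≤ k / α * n * α := by push_cast; gcongr
    _ = n * k := by field_simp

theorem add_lt_of_mul_sub_one_eq {α k m n R : ℝ} (hα : 1 < α) (hk : 0 < k)
    (hm : m * (α - 1) = (α + k) * ((2 * k + 1) * k)) (hn : m * α ≤ n * k)
    (hR : k * R ≤ (k + 1) * (m - k)) : R + (2 * k + 1) * k < m + n := by
  by_contra! h
  nlinarith [mul_le_mul_of_nonneg_left h hk.le, mul_pos (by linarith : 0 < α) hk]

open WGPInstance in
/-- If every induced matching of the bipartite graph `(U, W, E)` has size at most `k/α`
(`α > 1`, `k ≥ 1`), then every feasible schedule of the 4-layer WGP instance built from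
it, with `m = (1 − 1/α)⁻¹·(1 + k/α)·(2k+1)·k` packets released in groups of `k`, the
`h`-th group at time `(k+1)h`, has maximum flow time at least `(2k+1)·k`. -/
theorem fourLayer_flow_lower_bound {U W : Type*} (E : U → W → Prop)
    (α : ℝ) (hα : 1 < α) (k m : ℕ) (hk : 1 ≤ k) (hkm : k ∣ m)
    (hm : (m : ℝ) = (1 - 1 / α)⁻¹ * (1 + k / α) * (2 * k + 1) * k)
    (hmatch : ∀ M : Finset (U × W), IsBipartiteInducedMatching E M →
      (M.card : ℝ) ≤ k / α)
    (x : Fin m → ℕ → Layer U W) (hx : (fourLayerInstance E k m).Feasible x) :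
    (2 * k + 1) * k ≤ Finset.univ.sup ((fourLayerInstance E k m).flow x) := by
  have hk0 : (0 : ℝ) < k := by exact_mod_cast hk
  have hcount := mul_sub_one_eq_of_eq_inv_one_sub_inv_mul hα hm
  obtain ⟨q, rfl⟩ := hkm
  have hq : 1 ≤ q := Nat.one_le_iff_ne_zero.2 fun hq => by
    subst hq
    simp only [mul_zero, Nat.cast_zero, zero_mul] at hcount
    exact (mul_pos (by linarith : 0 < α + k) (by positivity)).ne hcount
  by_contra! hflow
  have hC := fourLayer_completion_le hx fun j =>
    (Finset.sup_lt_iff (by positivity)).1 hflow j (Finset.mem_univ j)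
  obtain ⟨n, hn_le, hn⟩ := fourLayer_exists_card_add_le hx (c := ⌊(k : ℝ) / α⌋₊)
    (fun M hM => Nat.le_floor (hmatch M hM)) hC
  have hR : (k : ℝ) * ((k + 1) * (q - 1) : ℕ) ≤ (k + 1) * ((k * q : ℕ) - k) := by
    push_cast [Nat.cast_sub hq]
    linarith
  have hlt := add_lt_of_mul_sub_one_eq hα hk0 hcount
    (mul_le_of_le_floor_div_mul (by linarith) hn) hR
  have hle : (((k * q : ℕ) + n : ℕ) : ℝ) ≤ ((k + 1) * (q - 1) + (2 * k + 1) * k : ℕ) := by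
    exact_mod_cast hn_le
  push_cast at hlt hle
  linarith
end

section
/- Let S ⊆ J be a nonempty set of packets of a WGP instance, and let C*_i denote the completion time of packet i in some feasible schedule. Then there exists a packet k ∈ S such that max_{i ∈ S} C*_i ≥ R_k + Σ_{i ∈ S} π_i. -/
/-!
In a feasible schedule a packet's distance to the sink drops by at most one per round, so a
packet `i` must, for each level `ℓ ≤ π_i`, spend a round moving from distance `ℓ` to `ℓ - 1`,
and no such round comes before `R_i`. Two such moves of different packets in the same round
would be calls `(u, v)`, `(u', v')` with `d(u', s) + d(s, v) ≤ γ₀ + (γ₀ - 1) ≤ d_I`, hence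
interfere. So the `∑ π_i` pairs `(i, ℓ)` occupy distinct rounds in `[min R, max C*)`.
-/

lemma Nat.le_add_sub_of_forall_le_succ_add_one {f : ℕ → ℕ} (hf : ∀ t, f t ≤ f (t + 1) + 1)
    {a b : ℕ} (hab : a ≤ b) : f a ≤ f b + (b - a) := by
  induction b, hab using Nat.le_induction with
  | base => simp
  | succ n hn ih =>
    have := hf n
    omega

lemma Nat.exists_mem_Ico_apply_succ_lt_le {α : Type*} [LinearOrder α] {f : ℕ → α} {a b : ℕ}
    {c : α} (hab : a ≤ b) (ha : c ≤ f a) (hb : f b < c) :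
    ∃ t ∈ Finset.Ico a b, f (t + 1) < c ∧ c ≤ f t := by
  induction b, hab using Nat.le_induction with
  | base => exact absurd ha (not_le.mpr hb)
  | succ n hn ih =>
    by_cases hn' : f n < c
    · obtain ⟨t, ht, hlt, hle⟩ := ih hn'
      exact ⟨t, Finset.Ico_subset_Ico_right n.le_succ ht, hlt, hle⟩
    · exact ⟨n, by simp [hn], hb, not_lt.mp hn'⟩

namespace WGPInstance

variable {V J : Type*} {I : WGPInstance V J} {y : J → ℕ → V}

def Crosses (I : WGPInstance V J) (y : J → ℕ → V) (j : J) (ℓ t : ℕ) : Prop :=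
  I.r j ≤ t ∧ t < I.completion y j ∧ I.G.dist (y j (t + 1)) I.s < ℓ ∧ ℓ ≤ I.G.dist (y j t) I.s

lemma Crosses.moves {j : J} {ℓ t : ℕ} (h : I.Crosses y j ℓ t) : y j (t + 1) ≠ y j t := by
  intro he
  have := h.2.2
  rw [he] at this
  omega

namespace Feasible

lemma reachable_of_le (hy : I.Feasible y) (j : J) {a b : ℕ} (hab : a ≤ b) :
    I.G.Reachable (y j a) (y j b) := by
  induction b, hab using Nat.le_induction with
  | base => rfl
  | succ n hn ih =>
    rcases hy.2.1 j n with h | h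
    · rwa [h]
    · exact ih.trans h.reachable

lemma reachable_sink (hy : I.Feasible y) (j : J) (t : ℕ) : I.G.Reachable (y j t) I.s := by
  obtain ⟨T, hT⟩ := hy.2.2.2 j
  rcases le_total t T with h | h
  · exact hT ▸ hy.reachable_of_le j h
  · exact (hT ▸ hy.reachable_of_le j h).symm

lemma dist_sink_le_succ_add_one (hy : I.Feasible y) (j : J) (t : ℕ) :
    I.G.dist (y j t) I.s ≤ I.G.dist (y j (t + 1)) I.s + 1 := by
  rcases hy.2.1 j t with h | h
  · rw [h]
    omega
  · have := h.reachable.dist_triangle_left I.s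
    rw [SimpleGraph.dist_eq_one_iff_adj.mpr h] at this
    omega

lemma completion_mem (hy : I.Feasible y) (j : J) :
    I.r j ≤ I.completion y j ∧ y j (I.completion y j) = I.s := by
  refine Nat.sInf_mem (s := {t | I.r j ≤ t ∧ y j t = I.s}) ?_
  obtain ⟨T, hT⟩ := hy.2.2.2 j
  rcases le_total (I.r j) T with h | h
  · exact ⟨T, h, hT⟩
  · exact ⟨I.r j, le_rfl, by rw [hy.1 j _ le_rfl, ← hy.1 j T h, hT]⟩

lemma dist_origin_le (hy : I.Feasible y) (j : J) {t : ℕ} (ht : I.r j ≤ t) :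
    I.G.dist (I.o j) I.s ≤ I.G.dist (y j t) I.s + (t - I.r j) := by
  rw [← hy.1 j _ le_rfl]
  exact Nat.le_add_sub_of_forall_le_succ_add_one (hy.dist_sink_le_succ_add_one j) ht

lemma release_add_dist_le_completion (hy : I.Feasible y) (j : J) :
    I.r j + I.G.dist (I.o j) I.s ≤ I.completion y j := by
  obtain ⟨hr, hC⟩ := hy.completion_mem j
  have := hy.dist_origin_le j hr
  rw [hC, SimpleGraph.dist_self] at this
  omega

lemma exists_crosses (hy : I.Feasible y) (j : J) {ℓ : ℕ} (hℓ : 1 ≤ ℓ)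
    (hℓδ : ℓ ≤ I.G.dist (I.o j) I.s) : ∃ t, I.Crosses y j ℓ t := by
  obtain ⟨hr, hC⟩ := hy.completion_mem j
  obtain ⟨t, ht, hlt, hle⟩ := Nat.exists_mem_Ico_apply_succ_lt_le
    (f := fun t ↦ I.G.dist (y j t) I.s) (c := ℓ) hr (by rwa [hy.1 j _ le_rfl])
    (by rwa [hC, SimpleGraph.dist_self])
  obtain ⟨htr, htC⟩ := Finset.mem_Ico.mp ht
  exact ⟨t, htr, htC, hlt, hle⟩

lemma dist_eq_of_crosses (hy : I.Feasible y) {j : J} {ℓ t : ℕ} (h : I.Crosses y j ℓ t) :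
    I.G.dist (y j t) I.s = ℓ := by
  have := hy.dist_sink_le_succ_add_one j t
  have := h.2.2
  omega

lemma release_add_dist_le_of_crosses (hy : I.Feasible y) {j : J} {ℓ t : ℕ}
    (h : I.Crosses y j ℓ t) : I.r j + I.G.dist (I.o j) I.s ≤ t + ℓ := by
  have := hy.dist_origin_le j h.1
  rw [hy.dist_eq_of_crosses h] at this
  have := h.1
  omega

/-- Two different packets crossing levels `ℓ, ℓ' ≤ γ₀` in the same round would make calls at
distance at most `ℓ' + (ℓ - 1) ≤ d_I` through the sink. -/
lemma eq_of_crosses_of_crosses (hy : I.Feasible y) {j k : J} {ℓ ℓ' t : ℕ}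
    (hj : I.Crosses y j ℓ t) (hk : I.Crosses y k ℓ' t)
    (hℓ : ℓ ≤ (I.dI + 1) / 2) (hℓ' : ℓ' ≤ (I.dI + 1) / 2) : j = k ∧ ℓ = ℓ' := by
  by_cases hjk : j = k
  · subst hjk
    exact ⟨rfl, (hy.dist_eq_of_crosses hj).symm.trans (hy.dist_eq_of_crosses hk)⟩
  refine absurd (Or.inl ?_) (hy.2.2.1 j k t hjk hj.moves hk.moves).2
  have hreach : I.G.Reachable (y k t) (y j (t + 1)) :=
    (hy.reachable_sink k t).trans (hy.reachable_sink j (t + 1)).symm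
  have htri := (hy.reachable_sink j (t + 1)).symm.dist_triangle_right (y k t)
  rw [hy.dist_eq_of_crosses hk, SimpleGraph.dist_comm (u := I.s)] at htri
  rw [← hreach.coe_dist_eq_edist, Nat.cast_le]
  have := hj.2.2.1
  omega

lemma sum_le_sup_completion_sub (hy : I.Feasible y) (S : Finset J) {π : J → ℕ} {a : ℕ}
    (hπδ : ∀ i ∈ S, π i ≤ I.G.dist (I.o i) I.s) (hπγ : ∀ i ∈ S, π i ≤ (I.dI + 1) / 2)
    (ha : ∀ i ∈ S, a ≤ I.r i + (I.G.dist (I.o i) I.s - π i)) :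
    ∑ i ∈ S, π i ≤ S.sup (I.completion y) - a := by
  have hcount : (S.sigma fun i ↦ Finset.Icc 1 (π i)).card
      ≤ (Finset.Ico a (S.sup (I.completion y))).card := by
    refine Finset.card_le_card_of_forall_subsingleton (fun p t ↦ I.Crosses y p.1 p.2 t) ?_ ?_
    · rintro ⟨i, ℓ⟩ hp
      obtain ⟨hiS, hℓ1, hℓπ⟩ : i ∈ S ∧ 1 ≤ ℓ ∧ ℓ ≤ π i := by simpa using hp
      obtain ⟨t, ht⟩ := hy.exists_crosses i hℓ1 (hℓπ.trans (hπδ i hiS))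
      have := hy.release_add_dist_le_of_crosses ht
      have := ha i hiS
      have := ht.1
      exact ⟨t, Finset.mem_Ico.mpr ⟨by omega, ht.2.1.trans_le (Finset.le_sup hiS)⟩, ht⟩
    · rintro t - ⟨i, ℓ⟩ hp ⟨i', ℓ'⟩ hp'
      simp only [Set.mem_ofPred_eq, Finset.mem_sigma, Finset.mem_Icc] at hp hp'
      obtain ⟨⟨hiS, -, hℓπ⟩, hi⟩ := hp
      obtain ⟨⟨hi'S, -, hℓπ'⟩, hi'⟩ := hp'
      obtain ⟨rfl, rfl⟩ := hy.eq_of_crosses_of_crosses hi hi'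
        (hℓπ.trans (hπγ i hiS)) (hℓπ'.trans (hπγ i' hi'S))
      rfl
  simpa using hcount

end Feasible

end WGPInstance

open WGPInstance in
theorem completion_lower_bound_general {V J : Type*}
    (I : WGPInstance V J) (y : J → ℕ → V) (hy : I.Feasible y)
    (S : Finset J) (hS : S.Nonempty) :
    ∃ k ∈ S,
      I.r k + (I.G.dist (I.o k) I.s - min (I.G.dist (I.o k) I.s) ((I.dI + 1) / 2))
        + ∑ i ∈ S, min (I.G.dist (I.o i) I.s) ((I.dI + 1) / 2)
      ≤ S.sup (I.completion y) := by
  set π : J → ℕ := fun i ↦ min (I.G.dist (I.o i) I.s) ((I.dI + 1) / 2)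
  change ∃ k ∈ S, I.r k + (I.G.dist (I.o k) I.s - π k) + ∑ i ∈ S, π i ≤ S.sup (I.completion y)
  obtain ⟨k, hkS, hk⟩ := S.exists_min_image (fun i ↦ I.r i + (I.G.dist (I.o i) I.s - π i)) hS
  have hsum := hy.sum_le_sup_completion_sub S (π := π) (fun i _ ↦ min_le_left _ _)
    (fun i _ ↦ min_le_right _ _) hk
  have hCk := hy.release_add_dist_le_completion k
  have hCS : I.completion y k ≤ S.sup (I.completion y) := Finset.le_sup hkS
  exact ⟨k, hkS, by omega⟩

open WGPInstance in
/-- Lower bound lemma: for any nonempty set `S` of packets of a WGP instance and any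
feasible schedule `y` with completion times `C*`, there is `k ∈ S` with
`max_{i ∈ S} C*_i ≥ R_k + Σ_{i ∈ S} π_i`, where `δ_i = d(o_i, s)`,
`γ₀ = ⌊(d_I+1)/2⌋`, `π_i = min {δ_i, γ₀}` and `R_k = r_k + δ_k − π_k`. -/
theorem completion_lower_bound {V J : Type*} [Fintype J]
    (I : WGPInstance V J) (hdI : 1 ≤ I.dI) (y : J → ℕ → V) (hy : I.Feasible y)
    (S : Finset J) (hS : S.Nonempty) :
    ∃ k ∈ S,
      I.r k + (I.G.dist (I.o k) I.s - min (I.G.dist (I.o k) I.s) ((I.dI + 1) / 2))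
        + ∑ i ∈ S, min (I.G.dist (I.o i) I.s) ((I.dI + 1) / 2)
      ≤ S.sup (I.completion y) :=
  completion_lower_bound_general I y hy S hS
end

section
/- Let A be an algorithm that maps every WGP instance to a feasible σ-speed schedule and has the online prefix property: for every instance and every time t, the schedule A produces restricted to the packets with release date at most t coincides with the schedule A produces on the sub-instance consisting only of those packets (so the completion time of each packet is determined at its release date and is unaffected by packets released later). If for every instance the maximum completion time of A's schedule is at most the optimal unit-speed maximum completion time (A is σ-speed optimal for C-WGP), then for every instance the maximum flow time of A's schedule is at most the optimal unit-speed maximum flow time (A is σ-speed optimal for F-WGP). -/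
namespace WGPInstance

variable {V J : Type*}

/-- A feasible `σ`-speed schedule: rounds of the schedule have length `1/σ` time units,
so round `t` of the schedule starts at real time `t/σ`; packet `j` may only be moved in
rounds `t` with `σ·r_j ≤ t`.  All other feasibility conditions are as in the unit-speed
case. -/
def FeasibleSpeed (I : WGPInstance V J) (σ : ℝ) (x : J → ℕ → V) : Prop :=
  (∀ j (t : ℕ), (t : ℝ) ≤ σ * I.r j → x j t = I.o j) ∧
  (∀ j t, x j (t + 1) = x j t ∨ I.G.Adj (x j t) (x j (t + 1))) ∧
  (∀ j k t, j ≠ k → x j (t + 1) ≠ x j t → x k (t + 1) ≠ x k t →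
    x j t ≠ x k t ∧ ¬ I.Interferes (x j t) (x j (t + 1)) (x k t) (x k (t + 1))) ∧
  (∀ j, ∃ t, x j t = I.s)

/-- The completion round (in `σ`-speed rounds, i.e. in time units of `1/σ`) of packet `j`:
the first round `t ≥ σ·r_j` with `x j t = s`.  The completion time of `j` in original
time units is `I.gridCompletion σ x j / σ`. -/
noncomputable def gridCompletion (I : WGPInstance V J) (σ : ℝ) (x : J → ℕ → V) (j : J) : ℕ :=
  sInf {t : ℕ | σ * I.r j ≤ (t : ℝ) ∧ x j t = I.s}

/-- Packet `j` is available at `σ`-speed round `t` if it has been released and has not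
yet reached the sink. -/
def SpeedActive (I : WGPInstance V J) (σ : ℝ) (x : J → ℕ → V) (j : J) (t : ℕ) : Prop :=
  σ * I.r j ≤ (t : ℝ) ∧ x j t ≠ I.s

/-- The `σ`-speed analogue of `PriorityGreedy`. -/
def PriorityGreedySpeed (I : WGPInstance V J) (σ : ℝ) (prio : J → ℕ) (x : J → ℕ → V) :
    Prop :=
  Function.Injective prio ∧
  (∀ j t, x j t = I.s → x j (t + 1) = I.s) ∧
  (∀ j t, x j (t + 1) ≠ x j t →
    I.SpeedActive σ x j t ∧ I.G.dist (x j (t + 1)) I.s + 1 = I.G.dist (x j t) I.s) ∧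
  (∀ j t, I.SpeedActive σ x j t → x j (t + 1) = x j t →
    ∀ v, I.G.Adj (x j t) v → I.G.dist v I.s + 1 = I.G.dist (x j t) I.s →
      ∃ k, prio k < prio j ∧ x k (t + 1) ≠ x k t ∧
        I.Interferes (x j t) v (x k t) (x k (t + 1)))

/-- `x` is a schedule that `σ`-FIFO may produce: it is a FIFO (earlier release date =
higher priority) greedy schedule on the `σ`-speed time grid, where release dates have
been scaled to `σ·r_j` (i.e. they stay at real time `r_j`). -/
def FIFOSpeed (I : WGPInstance V J) (σ : ℝ) (x : J → ℕ → V) : Prop :=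
  ∃ prio : J → ℕ, (∀ j k, I.r j < I.r k → prio j < prio k) ∧
    I.PriorityGreedySpeed σ prio x

end WGPInstance

/-!
By the prefix property, the completion time of packet `j` under `A` is its completion time
in the sub-instance of the packets released by `r_j`.  Applying `σ`-speed optimality to that
sub-instance and the restriction of a unit-speed schedule `y`, `C_j(A)` is at most the
makespan of `y` on the sub-instance; since all of its packets are released by `r_j`, that
makespan is at most `r_j` plus the maximum flow time of `y`.
-/

namespace WGPInstance

variable {V J : Type*}

def restrict (I : WGPInstance V J) (p : J → Prop) : WGPInstance V {j // p j} :=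
  ⟨I.G, I.s, I.dI, fun j => I.o j, fun j => I.r j⟩

theorem Feasible.restrict {I : WGPInstance V J} {y : J → ℕ → V} (hy : I.Feasible y)
    (p : J → Prop) : (I.restrict p).Feasible fun j => y j :=
  ⟨fun j => hy.1 j, fun j => hy.2.1 j,
    fun j k t hjk => hy.2.2.1 j k t (Subtype.coe_injective.ne hjk), fun j => hy.2.2.2 j⟩

theorem gridCompletion_restrict (I : WGPInstance V J) (σ : ℝ) {p : J → Prop}
    {x : J → ℕ → V} {x' : {j // p j} → ℕ → V} {j : J} (hj : p j) (hx : x' ⟨j, hj⟩ = x j) :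
    (I.restrict p).gridCompletion σ x' ⟨j, hj⟩ = I.gridCompletion σ x j := by
  simp only [gridCompletion, restrict, hx]

theorem sup_completion_restrict_le_add_iSup_flow [Fintype J] (I : WGPInstance V J)
    (y : J → ℕ → V) (t : ℕ) [Nonempty {j // I.r j ≤ t}] :
    ((Finset.univ.sup ((I.restrict (I.r · ≤ t)).completion fun j => y j) : ℕ) : ℝ) ≤
      t + ⨆ j, ((I.completion y j : ℝ) - I.r j) := by
  obtain ⟨k, -, hk⟩ := Finset.exists_mem_eq_sup Finset.univ Finset.univ_nonempty
    ((I.restrict (I.r · ≤ t)).completion fun j => y j)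
  have hkt : (I.r k : ℝ) ≤ t := by exact_mod_cast k.2
  have hflow : (I.completion y k : ℝ) - I.r k ≤ ⨆ j, ((I.completion y j : ℝ) - I.r j) :=
    le_ciSup (f := fun j => (I.completion y j : ℝ) - I.r j) (Set.finite_range _).bddAbove k.1
  rw [hk]
  change (I.completion y k : ℝ) ≤ _
  linarith

end WGPInstance

open WGPInstance in
theorem speed_optimal_completion_to_flow_general {V : Type*}
    (G : SimpleGraph V) (s : V) (dI : ℕ) (σ : ℝ) (hσ : 1 ≤ σ)
    (A : ∀ (J : Type) [Fintype J], (J → V) → (J → ℕ) → J → ℕ → V)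
    (hprefix : ∀ (J : Type) [Fintype J] (o : J → V) (r : J → ℕ) (t : ℕ) (j : J)
      (hj : r j ≤ t),
      A J o r j =
        A {j' : J // r j' ≤ t} (fun j' => o j'.1) (fun j' => r j'.1) ⟨j, hj⟩)
    (hopt : ∀ (J : Type) [Fintype J] (o : J → V) (r : J → ℕ) (y : J → ℕ → V),
      (WGPInstance.mk G s dI o r).Feasible y →
      ((Finset.univ.sup
          ((WGPInstance.mk G s dI o r).gridCompletion σ (A J o r)) : ℕ) : ℝ) / σ ≤
        ((Finset.univ.sup ((WGPInstance.mk G s dI o r).completion y) : ℕ) : ℝ)) :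
    ∀ (J : Type) [Fintype J] (o : J → V) (r : J → ℕ) (y : J → ℕ → V),
      (WGPInstance.mk G s dI o r).Feasible y →
      (⨆ j, ((((WGPInstance.mk G s dI o r).gridCompletion σ (A J o r) j : ℕ) : ℝ) / σ
          - (r j : ℝ))) ≤
        ⨆ j, ((((WGPInstance.mk G s dI o r).completion y j : ℕ) : ℝ) - (r j : ℝ)) := by
  intro J _ o r y hy
  set I := WGPInstance.mk G s dI o r
  rcases isEmpty_or_nonempty J with _ | _
  · simp only [Real.iSup_of_isEmpty, le_refl]
  refine ciSup_le fun j => ?_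
  have : Nonempty {k // r k ≤ r j} := ⟨⟨j, le_rfl⟩⟩
  set P := I.restrict (r · ≤ r j)
  have hprefix_j : (I.gridCompletion σ (A J o r) j : ℝ) ≤
      ((Finset.univ.sup (P.gridCompletion σ (A _ P.o P.r)) : ℕ) : ℝ) := by
    rw [← I.gridCompletion_restrict σ (p := (r · ≤ r j)) le_rfl
      (hprefix J o r (r j) j le_rfl).symm]
    exact_mod_cast Finset.le_sup (Finset.mem_univ _)
  have hopt_j : ((Finset.univ.sup (P.gridCompletion σ (A _ P.o P.r)) : ℕ) : ℝ) / σ ≤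
      ((Finset.univ.sup (P.completion fun k => y k) : ℕ) : ℝ) :=
    hopt _ P.o P.r _ (hy.restrict _)
  have hσ0 : 0 ≤ σ := zero_le_one.trans hσ
  have hmakespan := I.sup_completion_restrict_le_add_iSup_flow y (r j)
  calc (I.gridCompletion σ (A J o r) j : ℝ) / σ - r j
      ≤ ((Finset.univ.sup (P.gridCompletion σ (A _ P.o P.r)) : ℕ) : ℝ) / σ - r j := by
        gcongr
    _ ≤ _ := by linarith

open WGPInstance in
/-- Let `A` be an algorithm mapping every WGP instance (on a fixed graph `G` with sink
`s` and interference radius `d_I`, with an arbitrary finite packet set `J`, origins `o`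
and release dates `r`) to a feasible `σ`-speed schedule, and suppose `A` has the online
prefix property: for every instance and every time `t`, the schedule of `A` restricted
to the packets released by time `t` coincides with the schedule `A` produces on the
sub-instance consisting only of those packets.  If `A` is `σ`-speed optimal for C-WGP
(its maximum completion time, in original time units, is at most that of every feasible
unit-speed schedule), then `A` is `σ`-speed optimal for F-WGP (its maximum flow time is
at most that of every feasible unit-speed schedule). -/
theorem speed_optimal_completion_to_flow {V : Type*}
    (G : SimpleGraph V) (s : V) (dI : ℕ) (hdI : 1 ≤ dI) (σ : ℝ) (hσ : 1 ≤ σ)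
    (A : ∀ (J : Type) [Fintype J], (J → V) → (J → ℕ) → J → ℕ → V)
    (hfeas : ∀ (J : Type) [Fintype J] (o : J → V) (r : J → ℕ),
      (WGPInstance.mk G s dI o r).FeasibleSpeed σ (A J o r))
    (hprefix : ∀ (J : Type) [Fintype J] (o : J → V) (r : J → ℕ) (t : ℕ) (j : J)
      (hj : r j ≤ t),
      A J o r j =
        A {j' : J // r j' ≤ t} (fun j' => o j'.1) (fun j' => r j'.1) ⟨j, hj⟩)
    (hopt : ∀ (J : Type) [Fintype J] (o : J → V) (r : J → ℕ) (y : J → ℕ → V),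
      (WGPInstance.mk G s dI o r).Feasible y →
      ((Finset.univ.sup
          ((WGPInstance.mk G s dI o r).gridCompletion σ (A J o r)) : ℕ) : ℝ) / σ ≤
        ((Finset.univ.sup ((WGPInstance.mk G s dI o r).completion y) : ℕ) : ℝ)) :
    ∀ (J : Type) [Fintype J] (o : J → V) (r : J → ℕ) (y : J → ℕ → V),
      (WGPInstance.mk G s dI o r).Feasible y →
      (⨆ j, ((((WGPInstance.mk G s dI o r).gridCompletion σ (A J o r) j : ℕ) : ℝ) / σ
          - (r j : ℝ))) ≤
        ⨆ j, ((((WGPInstance.mk G s dI o r).completion y j : ℕ) : ℝ) - (r j : ℝ)) :=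
  speed_optimal_completion_to_flow_general G s dI σ hσ A hprefix hopt
end

section
/- For every interference radius d_I ≥ 1, the algorithm 5-FIFO is a 5-speed optimal algorithm for both C-WGP and F-WGP: on every WGP instance, the maximum completion time and the maximum flow time of the 5-speed schedule produced by 5-FIFO are at most the optimal maximum completion time and the optimal maximum flow time, respectively, over all feasible unit-speed schedules. -/
/-!
Fix a packet `j` and let `M` bound the optimal completion times of all packets released no
later than `j`; write `δ_k = d(o_k, s)` and `ρ = ⌈d_I / 2⌉`. If 5-FIFO has not delivered `j` by
round `5M`, follow blockers backwards from `j`: in each round the current packet `c` either moves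
one step closer to the sink, or is blocked by a higher-priority call at most `d_I + 1` further
from the sink, and passing to that blocker costs at most `min(δ_c, d_I + 1) + 1` rounds. The chain
ends at the release round `5 r_b` of some packet `b`, so
`5M < 5 r_b + δ_b + ∑_c (min(δ_c, d_I + 1) + 1)`, where by FIFO all packets involved are
released in `[r_b, r_j]`. In the optimal schedule each such `c` makes `min(δ_c, ρ)` calls ending
closer than `ρ` to the sink, no two of them in the same round, so `∑_c min(δ_c, ρ) ≤ M - r_b`.
Together with `r_b + δ_b ≤ M` and `min(δ, d_I + 1) + 1 ≤ 4 min(δ, ρ)` this gives `5M < 5M`.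
-/

namespace SimpleGraph

variable {V : Type*} {G : SimpleGraph V} {u v w s : V}

theorem Adj.dist_le_dist_add_one (h : G.Adj u v) (s : V) : G.dist u s ≤ G.dist v s + 1 := by
  rw [dist_comm, dist_comm (u := v)]
  rcases h.symm.diff_dist_adj (u := s) with h | h | h <;> omega

theorem Reachable.exists_adj_dist_add_one_eq (h : G.Reachable u s) (hne : u ≠ s) :
    ∃ v, G.Adj u v ∧ G.dist v s + 1 = G.dist u s := by
  obtain ⟨p, hp⟩ := h.exists_walk_length_eq_dist
  cases p with
  | nil => exact absurd rfl hne
  | cons hadj q =>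
    have hq := dist_le q
    have hv := hadj.dist_le_dist_add_one s
    rw [Walk.length_cons] at hp
    exact ⟨_, hadj, by omega⟩

theorem dist_le_dist_add_of_edist_le {n : ℕ} (h : G.edist u w ≤ n) :
    G.dist u s ≤ G.dist w s + n := by
  have huw : G.Reachable u w :=
    reachable_of_edist_ne_top (ne_top_of_le_ne_top (ENat.natCast_ne_top n) h)
  have hd : G.dist u w ≤ n := by rw [← huw.coe_dist_eq_edist] at h; exact_mod_cast h
  have := huw.dist_triangle_left s
  omega

theorem edist_le_dist_add_dist (hu : G.Reachable u s) (hw : G.Reachable s w) :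
    G.edist u w ≤ G.dist u s + G.dist s w := by
  rw [hu.coe_dist_eq_edist, hw.coe_dist_eq_edist]
  exact SimpleGraph.edist_triangle

section Steps

variable {z : ℕ → V}

theorem reachable_of_steps (hz : ∀ t, z (t + 1) = z t ∨ G.Adj (z t) (z (t + 1))) (a b : ℕ) :
    G.Reachable (z a) (z b) := by
  have hzero : ∀ n, G.Reachable (z 0) (z n) := by
    intro n
    induction n with
    | zero => rfl
    | succ n ih => exact ih.trans <| (hz n).elim (fun h => by rw [h]) Adj.reachable
  exact (hzero a).symm.trans (hzero b)

theorem dist_le_dist_add_of_steps (hz : ∀ t, z (t + 1) = z t ∨ G.Adj (z t) (z (t + 1)))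
    (s : V) {a b : ℕ} (hab : a ≤ b) : G.dist (z a) s ≤ G.dist (z b) s + (b - a) := by
  induction b, hab using Nat.le_induction with
  | base => simp
  | succ b hab ih =>
    have : G.dist (z b) s ≤ G.dist (z (b + 1)) s + 1 :=
      (hz b).elim (fun h => by rw [h]; omega) fun h => h.dist_le_dist_add_one s
    omega

end Steps

end SimpleGraph

theorem exists_step_across {f : ℕ → ℕ} {a b p : ℕ} (hab : a ≤ b) (ha : p < f a) (hb : f b ≤ p) :
    ∃ t, a ≤ t ∧ t < b ∧ p < f t ∧ f (t + 1) ≤ p := by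
  induction b, hab using Nat.le_induction with
  | base => omega
  | succ b hab ih =>
    by_cases h : f b ≤ p
    · obtain ⟨t, hat, htb, ht⟩ := ih h
      exact ⟨t, hat, by omega, ht⟩
    · exact ⟨b, hab, by omega, by omega, hb⟩

namespace WGPInstance

variable {V J : Type*} {I : WGPInstance V J}

section UnitSpeed

variable {y : J → ℕ → V}

theorem Feasible.reachable_sink_s13 (hy : I.Feasible y) (k : J) (t : ℕ) :
    I.G.Reachable (y k t) I.s := by
  obtain ⟨T, hT⟩ := hy.2.2.2 k
  simpa [hT] using SimpleGraph.reachable_of_steps (hy.2.1 k) t T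

theorem Feasible.completion_spec_s13 (hy : I.Feasible y) (k : J) :
    I.r k ≤ I.completion y k ∧ y k (I.completion y k) = I.s := by
  refine Nat.sInf_mem (s := {t | I.r k ≤ t ∧ y k t = I.s}) ?_
  obtain ⟨T, hT⟩ := hy.2.2.2 k
  rcases le_total (I.r k) T with h | h
  · exact ⟨T, h, hT⟩
  · exact ⟨I.r k, le_rfl, (hy.1 k _ le_rfl).trans ((hy.1 k T h).symm.trans hT)⟩

theorem Feasible.completion_eq_add_flow (hy : I.Feasible y) (k : J) :
    I.completion y k = I.r k + I.flow y k := by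
  have := (hy.completion_spec_s13 k).1
  unfold flow
  omega

theorem Feasible.add_dist_le_completion (hy : I.Feasible y) (k : J) :
    I.r k + I.G.dist (I.o k) I.s ≤ I.completion y k := by
  obtain ⟨hr, hs⟩ := hy.completion_spec_s13 k
  have := SimpleGraph.dist_le_dist_add_of_steps (hy.2.1 k) I.s hr
  rw [hy.1 k _ le_rfl, hs, SimpleGraph.dist_self] at this
  omega

theorem Feasible.exists_call_to_dist (hy : I.Feasible y) {k : J} {p : ℕ}
    (hp : p < I.G.dist (I.o k) I.s) :
    ∃ t, I.r k ≤ t ∧ t < I.completion y k ∧ y k (t + 1) ≠ y k t ∧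
      I.G.dist (y k (t + 1)) I.s = p := by
  obtain ⟨hr, hs⟩ := hy.completion_spec_s13 k
  obtain ⟨t, hrt, htC, hlt, hle⟩ := exists_step_across (f := fun t => I.G.dist (y k t) I.s) hr
    (by rwa [hy.1 k _ le_rfl]) (by rw [hs, SimpleGraph.dist_self]; omega)
  have hstep := SimpleGraph.dist_le_dist_add_of_steps (hy.2.1 k) I.s (Nat.le_add_right t 1)
  refine ⟨t, hrt, htC, fun h => ?_, by omega⟩
  rw [h] at hle
  omega

theorem Feasible.sum_min_dist_le (hy : I.Feasible y) {S : Finset J} {a M : ℕ}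
    (hS : ∀ k ∈ S, a ≤ I.r k ∧ I.completion y k ≤ M) :
    ∑ k ∈ S, min (I.G.dist (I.o k) I.s) ((I.dI + 1) / 2) ≤ M - a := by
  classical
  set ρ := (I.dI + 1) / 2
  let R : J → Finset ℕ := fun k =>
    {t ∈ Finset.Ico a M | y k (t + 1) ≠ y k t ∧ I.G.dist (y k (t + 1)) I.s < ρ}
  have hcard : ∀ k ∈ S, min (I.G.dist (I.o k) I.s) ρ ≤ (R k).card := by
    intro k hk
    have := Finset.card_le_card_of_surjOn (fun t => I.G.dist (y k (t + 1)) I.s)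
      (s := R k) (t := Finset.range (min (I.G.dist (I.o k) I.s) ρ)) ?_
    · simpa using this
    intro p hp
    simp only [Finset.coe_range, Set.mem_Iio, lt_min_iff] at hp
    obtain ⟨t, hrt, htC, hmove, hdist⟩ := hy.exists_call_to_dist hp.1
    have := hS k hk
    refine ⟨t, ?_, hdist⟩
    simp only [R, Finset.coe_filter, Finset.mem_Ico]
    exact ⟨⟨by omega, by omega⟩, hmove, by omega⟩
  -- Two such calls start within `ρ` and end within `ρ - 1` of the sink, and `2ρ - 1 ≤ d_I`.
  have hdisj : (S : Set J).PairwiseDisjoint R := by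
    intro k _ k' _ hkk'
    refine Finset.disjoint_left.2 fun t htk htk' => ?_
    simp only [R, Finset.mem_filter] at htk htk'
    refine (hy.2.2.1 k k' t hkk' htk.2.1 htk'.2.1).2 (Or.inl ?_)
    have hk' := SimpleGraph.dist_le_dist_add_of_steps (hy.2.1 k') I.s (Nat.le_add_right t 1)
    calc I.G.edist (y k' t) (y k (t + 1))
        ≤ I.G.dist (y k' t) I.s + I.G.dist I.s (y k (t + 1)) :=
          SimpleGraph.edist_le_dist_add_dist (hy.reachable_sink_s13 k' t)
            (hy.reachable_sink_s13 k (t + 1)).symm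
      _ ≤ I.dI := by
          rw [SimpleGraph.dist_comm (u := I.s)]
          exact_mod_cast (by omega)
  calc ∑ k ∈ S, min (I.G.dist (I.o k) I.s) ρ
      ≤ ∑ k ∈ S, (R k).card := Finset.sum_le_sum hcard
    _ = (S.biUnion R).card := (Finset.card_biUnion hdisj).symm
    _ ≤ (Finset.Ico a M).card :=
        Finset.card_le_card (Finset.biUnion_subset.2 fun k _ => Finset.filter_subset _ _)
    _ = M - a := Nat.card_Ico a M

end UnitSpeed

section Speed

variable {σ : ℝ} {x : J → ℕ → V} {prio : J → ℕ}

theorem FeasibleSpeed.reachable_sink_s13 (hx : I.FeasibleSpeed σ x) (k : J) (t : ℕ) :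
    I.G.Reachable (x k t) I.s := by
  obtain ⟨T, hT⟩ := hx.2.2.2 k
  simpa [hT] using SimpleGraph.reachable_of_steps (hx.2.1 k) t T

theorem PriorityGreedySpeed.dist_antitone (hpg : I.PriorityGreedySpeed σ prio x) (k : J) :
    Antitone fun t => I.G.dist (x k t) I.s := by
  refine antitone_nat_of_succ_le fun t => ?_
  by_cases h : x k (t + 1) = x k t
  · rw [h]
  · have := (hpg.2.2.1 k t h).2
    omega

theorem PriorityGreedySpeed.exists_blocker (hx : I.FeasibleSpeed σ x)
    (hpg : I.PriorityGreedySpeed σ prio x) {c : J} {t : ℕ} (hact : I.SpeedActive σ x c t)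
    (hstay : x c (t + 1) = x c t) :
    ∃ k, prio k < prio c ∧ x k (t + 1) ≠ x k t ∧
      I.G.dist (x c t) I.s ≤ I.G.dist (x k t) I.s + (I.dI + 1) := by
  obtain ⟨v, hadj, hv⟩ := (hx.reachable_sink_s13 c t).exists_adj_dist_add_one_eq hact.2
  obtain ⟨k, hkc, hmove, hint⟩ := hpg.2.2.2 c t hact hstay v hadj hv
  have hk := (hpg.2.2.1 k t hmove).2
  refine ⟨k, hkc, hmove, ?_⟩
  rcases hint with h | h
  · rw [SimpleGraph.edist_comm] at h
    have := SimpleGraph.dist_le_dist_add_of_edist_le (s := I.s) h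
    omega
  · have := SimpleGraph.dist_le_dist_add_of_edist_le (s := I.s) h
    omega

end Speed

section IntegerSpeed

variable {σ : ℕ} {x : J → ℕ → V} {prio : J → ℕ}

theorem PriorityGreedySpeed.dist_le_dist_origin (hx : I.FeasibleSpeed σ x)
    (hpg : I.PriorityGreedySpeed σ prio x) (k : J) (t : ℕ) :
    I.G.dist (x k t) I.s ≤ I.G.dist (I.o k) I.s := by
  rw [← hx.1 k 0 (by push_cast; positivity)]
  exact hpg.dist_antitone k (Nat.zero_le t)

theorem PriorityGreedySpeed.exists_blocking_chain (hx : I.FeasibleSpeed σ x)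
    (hpg : I.PriorityGreedySpeed σ prio x) (t : ℕ) {c : J} (hrel : σ * I.r c ≤ t)
    (hs : x c t ≠ I.s) :
    ∃ b, ∃ S : Finset J, prio b ≤ prio c ∧
      (∀ k ∈ S, prio b ≤ prio k ∧ prio k ≤ prio c ∧ 0 < I.G.dist (I.o k) I.s) ∧
      t + I.G.dist (x c t) I.s ≤ σ * I.r b + I.G.dist (I.o b) I.s +
        ∑ k ∈ S, (min (I.G.dist (I.o k) I.s) (I.dI + 1) + 1) := by
  classical
  induction t using Nat.strong_induction_on generalizing c with
  | _ t ih =>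
  rcases le_or_gt t (σ * I.r c) with hle | hlt
  · exact ⟨c, ∅, le_rfl, by simp, by rw [hx.1 c t (by exact_mod_cast hle)]; simpa using hle⟩
  obtain ⟨u, rfl⟩ : ∃ u, t = u + 1 := ⟨t - 1, by omega⟩
  have hsu : x c u ≠ I.s := fun h => hs (hpg.2.1 c u h)
  by_cases hstay : x c (u + 1) = x c u
  · obtain ⟨k, hkc, hmove, hdist⟩ :=
      hpg.exists_blocker hx ⟨by exact_mod_cast (by omega : σ * I.r c ≤ u), hsu⟩ hstay
    obtain ⟨⟨hrk, hks⟩, -⟩ := hpg.2.2.1 k u hmove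
    obtain ⟨b, S, hbk, hS, hchain⟩ := ih u (by omega) (by exact_mod_cast hrk) hks
    have hcS : c ∉ S := fun hc => (hS c hc).2.1.not_gt hkc
    have hpos := (hx.reachable_sink_s13 c u).pos_dist_of_ne hsu
    have horigin := hpg.dist_le_dist_origin hx c u
    refine ⟨b, insert c S, by omega, ?_, ?_⟩
    · refine Finset.forall_mem_insert _ _ _ |>.2 ⟨⟨by omega, le_rfl, by omega⟩, fun k' hk' => ?_⟩
      exact ⟨(hS k' hk').1, by have := (hS k' hk').2.1; omega, (hS k' hk').2.2⟩
    · rw [Finset.sum_insert hcS, hstay]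
      omega
  · obtain ⟨b, S, hbc, hS, hchain⟩ := ih u (by omega) (by omega) hsu
    have := (hpg.2.2.1 c u hstay).2
    exact ⟨b, S, hbc, hS, by omega⟩

theorem FIFOSpeed.gridCompletion_le {y : J → ℕ → V} (hσ : 5 ≤ σ) (hdI : 1 ≤ I.dI)
    (hx : I.FeasibleSpeed σ x) (hfifo : I.FIFOSpeed σ x) (hy : I.Feasible y) {j : J} {M : ℕ}
    (hM : ∀ k, I.r k ≤ I.r j → I.completion y k ≤ M) :
    I.gridCompletion σ x j ≤ σ * M := by
  obtain ⟨prio, hprio, hpg⟩ := hfifo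
  have release_le : ∀ {a b}, prio a ≤ prio b → I.r a ≤ I.r b :=
    fun h => not_lt.1 fun h' => (hprio _ _ h').not_ge h
  have hjM : I.r j ≤ M := (hy.completion_spec_s13 j).1.trans (hM j le_rfl)
  by_contra! hlt
  have hs : x j (σ * M) ≠ I.s := fun hs =>
    hlt.not_ge (Nat.sInf_le ⟨by push_cast; gcongr, hs⟩)
  obtain ⟨b, S, hbj, hS, hchain⟩ :=
    hpg.exists_blocking_chain hx (σ * M) (Nat.mul_le_mul_left σ hjM) hs
  have hb : I.r b + I.G.dist (I.o b) I.s ≤ M :=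
    (hy.add_dist_le_completion b).trans (hM b (release_le hbj))
  have hnear := hy.sum_min_dist_le (a := I.r b)
    fun k hk => ⟨release_le (hS k hk).1, hM k (release_le (hS k hk).2.1)⟩
  have hsum : ∑ k ∈ S, (min (I.G.dist (I.o k) I.s) (I.dI + 1) + 1) ≤
      4 * ∑ k ∈ S, min (I.G.dist (I.o k) I.s) ((I.dI + 1) / 2) := by
    rw [Finset.mul_sum]
    exact Finset.sum_le_sum fun k hk => by have := (hS k hk).2.2; omega
  have hpos := (hx.reachable_sink_s13 j (σ * M)).pos_dist_of_ne hs
  obtain ⟨e, rfl⟩ := Nat.exists_eq_add_of_le (hb.trans' (Nat.le_add_right _ _))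
  have : 5 * e ≤ σ * e := Nat.mul_le_mul_right e hσ
  simp only [Nat.add_sub_cancel_left] at hnear
  nlinarith

end IntegerSpeed

end WGPInstance

open WGPInstance in
/-- For every interference radius `d_I ≥ 1`, the algorithm 5-FIFO is a 5-speed optimal
algorithm for both C-WGP and F-WGP: on every WGP instance, for every 5-speed schedule
`x` that 5-FIFO may produce and every feasible unit-speed schedule `y`, the maximum
completion time of `x` (in original time units) is at most the maximum completion time
of `y`, and the maximum flow time of `x` is at most the maximum flow time of `y`. -/
theorem fiveFifo_speed_optimal {V J : Type*} [Fintype J]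
    (I : WGPInstance V J) (hdI : 1 ≤ I.dI)
    (x : J → ℕ → V) (hx : I.FeasibleSpeed 5 x) (hfifo : I.FIFOSpeed 5 x)
    (y : J → ℕ → V) (hy : I.Feasible y) :
    ((Finset.univ.sup (I.gridCompletion 5 x) : ℕ) : ℝ) / 5 ≤
        ((Finset.univ.sup (I.completion y) : ℕ) : ℝ) ∧
    (⨆ j, (((I.gridCompletion 5 x j : ℕ) : ℝ) / 5 - (I.r j : ℝ))) ≤
        ⨆ j, (((I.completion y j : ℕ) : ℝ) - (I.r j : ℝ)) := by
  have hbound : ∀ j M, (∀ k, I.r k ≤ I.r j → I.completion y k ≤ M) →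
      I.gridCompletion 5 x j ≤ 5 * M := fun j M hM => by
    exact_mod_cast FIFOSpeed.gridCompletion_le (σ := 5) le_rfl hdI (by exact_mod_cast hx)
      (by exact_mod_cast hfifo) hy hM
  refine ⟨?_, ?_⟩
  · have h : Finset.univ.sup (I.gridCompletion 5 x) ≤ 5 * Finset.univ.sup (I.completion y) :=
      Finset.sup_le fun j _ => hbound j _ fun k _ => Finset.le_sup (Finset.mem_univ k)
    rw [div_le_iff₀ (by norm_num)]
    exact_mod_cast h.trans_eq (mul_comm _ _)
  · refine Real.iSup_le (fun j => ?_)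
      (Real.iSup_nonneg fun k => sub_nonneg.2 (by exact_mod_cast (hy.completion_spec_s13 k).1))
    obtain ⟨j₀, -, hj₀⟩ := Finset.univ.exists_max_image (I.flow y) ⟨j, Finset.mem_univ j⟩
    have hj : (I.gridCompletion 5 x j : ℝ) ≤ 5 * (I.r j + I.flow y j₀) := by
      exact_mod_cast hbound j _ fun k hk => by
        have := hj₀ k (Finset.mem_univ k)
        rw [hy.completion_eq_add_flow]
        omega
    refine le_trans ?_ (le_ciSup (Set.finite_range _).bddAbove j₀)
    rw [hy.completion_eq_add_flow j₀]
    push_cast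
    linarith
end
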